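/- arXiv:2312.04405 — 2 statements merged into one kernel-verified Lean document; each statement's English description precedes it below -/
import Mathlib

section
/- Let A, B be Hermitian unitary operators (±1-valued observables) on a finite-dimensional Hilbert space H and let |ψ⟩ ∈ H ⊗ H be a vector such that (A+B)²|ψ⟩ = 2|ψ⟩ (as operators acting on the first factor tensored with identity) and (A−B)²|ψ⟩ = 2|ψ⟩. If the reduced density operator of |ψ⟩ on the first factor is invertible, then A and B anticommute: AB + BA = 0. -/
open Matrix
open scoped Kronecker ComplexConjugate

/-- If `A`, `B` are Hermitian unitary (`±1`-valued) observables on a finite-dimensional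
Hilbert space `ℂⁿ`, `|ψ⟩ ∈ ℂⁿ ⊗ ℂⁿ` satisfies `(A+B)² ⊗ 1 |ψ⟩ = 2|ψ⟩` and
`(A−B)² ⊗ 1 |ψ⟩ = 2|ψ⟩`, and the reduced density matrix on the first factor is
invertible, then `A` and `B` anticommute. -/
theorem stmt_0 (n : ℕ) (A B : Matrix (Fin n) (Fin n) ℂ)
    (hA : A.IsHermitian) (hB : B.IsHermitian)
    (hA2 : A * A = 1) (hB2 : B * B = 1)
    (ψ : Fin n × Fin n → ℂ)
    (hplus : (((A + B) * (A + B)) ⊗ₖ (1 : Matrix (Fin n) (Fin n) ℂ)) *ᵥ ψ = (2 : ℂ) • ψ)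
    (hminus : (((A - B) * (A - B)) ⊗ₖ (1 : Matrix (Fin n) (Fin n) ℂ)) *ᵥ ψ = (2 : ℂ) • ψ)
    (ρ₁ : Matrix (Fin n) (Fin n) ℂ)
    (hρ₁ : ρ₁ = fun i j => ∑ k, ψ (i, k) * conj (ψ (j, k)))
    (hinv : IsUnit ρ₁) :
    A * B + B * A = 0 := by
  set M : Matrix (Fin n) (Fin n) ℂ := Matrix.of (fun i k => ψ (i, k)) with hM
  have key : ∀ P : Matrix (Fin n) (Fin n) ℂ, ∀ i k,
      ((P ⊗ₖ (1 : Matrix (Fin n) (Fin n) ℂ)) *ᵥ ψ) (i, k) = (P * M) i k := by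
    intro P i k
    simp only [Matrix.mulVec, Matrix.mul_apply, dotProduct, Fintype.sum_prod_type,
      Matrix.kroneckerMap_apply, Matrix.one_apply, mul_ite, mul_one, mul_zero, ite_mul,
      zero_mul, hM, Matrix.of_apply]
    refine Finset.sum_congr rfl fun j _ => ?_
    simp [Finset.sum_ite_eq]
  have h1 : ((A + B) * (A + B)) * M = (2 : ℂ) • M := by
    ext i k
    have := congrFun hplus (i, k)
    rw [key] at this
    simpa [hM] using this
  have h2 : ((A - B) * (A - B)) * M = (2 : ℂ) • M := by
    ext i k
    have := congrFun hminus (i, k)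
    rw [key] at this
    simpa [hM] using this
  have hC : (A * B + B * A) * M = 0 := by
    have hdiff : ((A + B) * (A + B)) * M - ((A - B) * (A - B)) * M
        = (2 : ℂ) • ((A * B + B * A) * M) := by
      rw [← Matrix.sub_mul]
      have : (A + B) * (A + B) - (A - B) * (A - B) = (2 : ℂ) • (A * B + B * A) := by
        noncomm_ring
        simp [smul_add, two_smul]
      rw [this, Matrix.smul_mul]
    rw [h1, h2, sub_self] at hdiff
    have := hdiff.symm
    have h2ne : (2 : ℂ) ≠ 0 := two_ne_zero
    exact (smul_eq_zero.mp this).resolve_left h2ne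
  have hρM : ρ₁ = M * Mᴴ := by
    ext i j
    simp [hρ₁, Matrix.mul_apply, Matrix.conjTranspose_apply, hM]
  have hCρ : (A * B + B * A) * ρ₁ = 0 := by
    rw [hρM, ← Matrix.mul_assoc, hC, Matrix.zero_mul]
  have hdet : IsUnit ρ₁.det := (Matrix.isUnit_iff_isUnit_det ρ₁).mp hinv
  calc A * B + B * A = (A * B + B * A) * (ρ₁ * ρ₁⁻¹) := by
        rw [Matrix.mul_nonsing_inv _ hdet, Matrix.mul_one]
    _ = 0 := by rw [← Matrix.mul_assoc, hCρ, Matrix.zero_mul]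
end

section
/- The maximal value over local deterministic strategies of the Bell expression I_l = (−1)^{l₁}[(N−1)⟨Ã₁₁ ∏_{i=2}^N A_{i,1}⟩ + Σ_{i=2}^N (−1)^{l_i} ⟨Ã₁₀ A_{i,0}⟩ − (−1)^{l₁} Σ_{i=2}^N (−1)^{l_i} ⟨A_{1,2} A_{i,2} ∏_{j=2, j≠i}^N A_{j,1}⟩] equals (√2 + 1)(N − 1), where Ã₁₀ = (A_{1,0} − A_{1,1})/√2 and Ã₁₁ = (A_{1,0} + A_{1,1})/√2. Here in a local deterministic strategy each A_{i,j} ∈ {−1, +1} and expectation values of products equal the products of values. -/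
namespace Stmt4

/-- The Bell expression `I_l` for a local deterministic strategy `a`, where `a i j` is the
(deterministic) value of observable `A_{i,j}`. Party `1` of the paper is indexed `0` here. -/
noncomputable def bell {N : ℕ} (h : 0 < N) (l : Fin N → Fin 2) (a : Fin N → Fin 3 → ℝ) : ℝ :=
  let z : Fin N := ⟨0, h⟩
  let At1 : ℝ := (a z 0 + a z 1) / Real.sqrt 2
  let At0 : ℝ := (a z 0 - a z 1) / Real.sqrt 2
  ((-1 : ℝ) ^ (l z : ℕ)) *
    ((N - 1 : ℝ) * (At1 * ∏ i ∈ Finset.univ.erase z, a i 1)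
      + (∑ i ∈ Finset.univ.erase z, ((-1 : ℝ) ^ (l i : ℕ)) * (At0 * a i 0))
      - ((-1 : ℝ) ^ (l z : ℕ)) *
          ∑ i ∈ Finset.univ.erase z, ((-1 : ℝ) ^ (l i : ℕ)) *
            (a z 2 * a i 2 * ∏ j ∈ (Finset.univ.erase z).erase i, a j 1))

lemma pm_pow (k : ℕ) : ((-1 : ℝ) ^ k = 1 ∨ (-1 : ℝ) ^ k = -1) := by
  rcases Nat.even_or_odd k with h | h
  · exact Or.inl h.neg_one_pow
  · exact Or.inr h.neg_one_pow

lemma pm_abs {x : ℝ} (h : x = 1 ∨ x = -1) : |x| = 1 := by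
  rcases h with h | h <;> simp [h]

lemma pm_sq {x : ℝ} (h : x = 1 ∨ x = -1) : x * x = 1 := by
  rcases h with h | h <;> simp [h]

lemma bell_eq {N : ℕ} (h : 0 < N) (l : Fin N → Fin 2) (a : Fin N → Fin 3 → ℝ) :
    bell h l a =
      ((-1 : ℝ) ^ (l ⟨0, h⟩ : ℕ)) *
        ((N - 1 : ℝ) * (((a ⟨0, h⟩ 0 + a ⟨0, h⟩ 1) / Real.sqrt 2) *
            ∏ i ∈ Finset.univ.erase ⟨0, h⟩, a i 1)
          + (∑ i ∈ Finset.univ.erase ⟨0, h⟩, ((-1 : ℝ) ^ (l i : ℕ)) *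
              (((a ⟨0, h⟩ 0 - a ⟨0, h⟩ 1) / Real.sqrt 2) * a i 0))
          - ((-1 : ℝ) ^ (l ⟨0, h⟩ : ℕ)) *
              ∑ i ∈ Finset.univ.erase ⟨0, h⟩, ((-1 : ℝ) ^ (l i : ℕ)) *
                (a ⟨0, h⟩ 2 * a i 2 * ∏ j ∈ (Finset.univ.erase ⟨0, h⟩).erase i, a j 1)) := rfl

/-- The maximal value of the Bell expression `I_l` over local deterministic strategies
(all `A_{i,j} ∈ {−1, +1}`) equals `(√2 + 1)(N − 1)`. -/
theorem stmt_4 (N : ℕ) (hN : 2 ≤ N) (l : Fin N → Fin 2) :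
    IsGreatest
      {x : ℝ | ∃ a : Fin N → Fin 3 → ℝ,
        (∀ i j, a i j = 1 ∨ a i j = -1) ∧ x = bell (by omega) l a}
      ((Real.sqrt 2 + 1) * (N - 1)) := by
  have hs2 : Real.sqrt 2 * Real.sqrt 2 = 2 := Real.mul_self_sqrt (by norm_num)
  have hs2pos : (0:ℝ) < Real.sqrt 2 := by positivity
  have hNpos : 0 < N := by omega
  have hcard : (((Finset.univ : Finset (Fin N)).erase ⟨0, hNpos⟩).card : ℝ) = (N : ℝ) - 1 := by
    rw [Finset.card_erase_of_mem (Finset.mem_univ _), Finset.card_univ, Fintype.card_fin]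
    have h1 : 1 ≤ N := by omega
    push_cast [Nat.cast_sub h1]
    ring
  have hN1 : (0:ℝ) ≤ (N:ℝ) - 1 := by
    have : (1:ℝ) ≤ (N:ℝ) := by exact_mod_cast Nat.one_le_of_lt hN
    linarith
  constructor
  · -- achievability
    set aa : Fin N → Fin 3 → ℝ := fun i j =>
      if (i : ℕ) = 0 then (if j = 2 then 1 else (-1)^(l i : ℕ))
      else (if j = 2 then -(-1)^(l i : ℕ) else 1) with haa
    refine ⟨aa, ?_, ?_⟩
    · intro i j
      rcases pm_pow (l i : ℕ) with h' | h' <;>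
        by_cases hi : (i : ℕ) = 0 <;> by_cases hj : j = 2 <;> simp [haa, hi, hj, h']
    · rw [bell_eq]
      have ha0 : aa ⟨0, hNpos⟩ 0 = (-1 : ℝ)^(l ⟨0, hNpos⟩ : ℕ) := by simp [haa]
      have ha1 : aa ⟨0, hNpos⟩ 1 = (-1 : ℝ)^(l ⟨0, hNpos⟩ : ℕ) := by simp [haa]
      have hne : ∀ i : Fin N, i ∈ Finset.univ.erase (⟨0, hNpos⟩ : Fin N) → (i : ℕ) ≠ 0 := by
        intro i hi h0
        exact Finset.ne_of_mem_erase hi (Fin.ext h0)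
      have e1 : ∏ i ∈ Finset.univ.erase (⟨0, hNpos⟩ : Fin N), aa i 1 = 1 := by
        apply Finset.prod_eq_one
        intro i hi
        simp [haa, hne i hi]
      have e2 : ∑ i ∈ Finset.univ.erase (⟨0, hNpos⟩ : Fin N), ((-1 : ℝ) ^ (l i : ℕ)) *
          (((aa ⟨0, hNpos⟩ 0 - aa ⟨0, hNpos⟩ 1) / Real.sqrt 2) * aa i 0) = 0 := by
        apply Finset.sum_eq_zero
        intro i _
        rw [ha0, ha1, sub_self, zero_div, zero_mul, mul_zero]
      have e3 : ∑ i ∈ Finset.univ.erase (⟨0, hNpos⟩ : Fin N), ((-1 : ℝ) ^ (l i : ℕ)) *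
          (aa ⟨0, hNpos⟩ 2 * aa i 2 *
            ∏ j ∈ (Finset.univ.erase (⟨0, hNpos⟩ : Fin N)).erase i, aa j 1) = -((N:ℝ) - 1) := by
        have : ∀ i ∈ Finset.univ.erase (⟨0, hNpos⟩ : Fin N), ((-1 : ℝ) ^ (l i : ℕ)) *
            (aa ⟨0, hNpos⟩ 2 * aa i 2 *
              ∏ j ∈ (Finset.univ.erase (⟨0, hNpos⟩ : Fin N)).erase i, aa j 1) = -1 := by
          intro i hi
          have hp : ∏ j ∈ (Finset.univ.erase (⟨0, hNpos⟩ : Fin N)).erase i, aa j 1 = 1 := by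
            apply Finset.prod_eq_one
            intro j hj
            have hj' := Finset.mem_of_mem_erase hj
            simp [haa, hne j hj']
          have h2 : aa ⟨0, hNpos⟩ 2 = 1 := by simp [haa]
          have hi2 : aa i 2 = -(-1 : ℝ)^(l i : ℕ) := by simp [haa, hne i hi]
          rw [hp, h2, hi2, one_mul, mul_one, mul_neg, pm_sq (pm_pow _)]
        rw [Finset.sum_congr rfl this, Finset.sum_const, nsmul_eq_mul, hcard]
        ring
      rw [e1, e2, e3, ha0, ha1]
      rcases pm_pow (l (⟨0, hNpos⟩ : Fin N) : ℕ) with h | h <;> rw [h] <;> field_simp <;>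
        ring_nf <;> nlinarith [hs2, hN1, hs2pos]
  · rintro x ⟨a, ha, rfl⟩
    rw [bell_eq]
    set z : Fin N := ⟨0, hNpos⟩
    set s0 : ℝ := (-1 : ℝ) ^ (l z : ℕ) with hs0
    have habs : ∀ i j, |a i j| = 1 := fun i j => pm_abs (ha i j)
    set S3 : ℝ := ∑ i ∈ Finset.univ.erase z, ((-1 : ℝ) ^ (l i : ℕ)) *
        (a z 2 * a i 2 * ∏ j ∈ (Finset.univ.erase z).erase i, a j 1) with hS3def
    have hS3 : |S3| ≤ (N:ℝ) - 1 := by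
      calc |S3| ≤ ∑ i ∈ Finset.univ.erase z, |((-1 : ℝ) ^ (l i : ℕ)) *
            (a z 2 * a i 2 * ∏ j ∈ (Finset.univ.erase z).erase i, a j 1)| :=
          Finset.abs_sum_le_sum_abs _ _
        _ ≤ ∑ _i ∈ Finset.univ.erase z, (1:ℝ) := by
            apply Finset.sum_le_sum
            intro i _
            have : |∏ j ∈ (Finset.univ.erase z).erase i, a j 1| = 1 := by
              rw [Finset.abs_prod]
              exact Finset.prod_eq_one fun j _ => habs j 1
            rw [abs_mul, abs_mul, abs_mul, pm_abs (pm_pow _), habs, habs, this]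
            norm_num
        _ = (N:ℝ) - 1 := by rw [Finset.sum_const, nsmul_eq_mul, hcard, mul_one]
    set T : ℝ := ((N:ℝ) - 1) * (((a z 0 + a z 1) / Real.sqrt 2) *
        ∏ i ∈ Finset.univ.erase z, a i 1)
      + ∑ i ∈ Finset.univ.erase z, ((-1 : ℝ) ^ (l i : ℕ)) *
          (((a z 0 - a z 1) / Real.sqrt 2) * a i 0) with hTdef
    have hT : |T| ≤ Real.sqrt 2 * ((N:ℝ) - 1) := by
      by_cases hcase : a z 0 = a z 1
      · have e2 : ∑ i ∈ Finset.univ.erase z, ((-1 : ℝ) ^ (l i : ℕ)) *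
            (((a z 0 - a z 1) / Real.sqrt 2) * a i 0) = 0 := by
          apply Finset.sum_eq_zero
          intro i _
          rw [hcase, sub_self, zero_div, zero_mul, mul_zero]
        have hprod : |∏ i ∈ Finset.univ.erase z, a i 1| = 1 := by
          rw [Finset.abs_prod]
          exact Finset.prod_eq_one fun j _ => habs j 1
        have hAt1 : |(a z 0 + a z 1) / Real.sqrt 2| = Real.sqrt 2 := by
          rw [hcase, abs_div, abs_of_pos hs2pos]
          have : |a z 1 + a z 1| = 2 := by
            rcases ha z 1 with h | h <;> rw [h] <;> norm_num
          rw [this, eq_comm, eq_div_iff hs2pos.ne', hs2]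
        rw [hTdef, e2, add_zero, abs_mul, abs_mul, hAt1, hprod, mul_one,
          abs_of_nonneg hN1, mul_comm]
      · have hopp : a z 0 = -(a z 1) := by
          rcases ha z 0 with h | h <;> rcases ha z 1 with h' | h'
          · exact absurd (h.trans h'.symm) hcase
          · simp [h, h']
          · simp [h, h']
          · exact absurd (h.trans h'.symm) hcase
        have e1 : (a z 0 + a z 1) / Real.sqrt 2 = 0 := by
          rw [hopp, neg_add_cancel, zero_div]
        have hAt0 : |(a z 0 - a z 1) / Real.sqrt 2| = Real.sqrt 2 := by
          rw [hopp, abs_div, abs_of_pos hs2pos]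
          have : |-(a z 1) - a z 1| = 2 := by
            rcases ha z 1 with h | h <;> rw [h] <;> norm_num
          rw [this, eq_comm, eq_div_iff hs2pos.ne', hs2]
        rw [hTdef, e1, zero_mul, mul_zero, zero_add]
        calc |∑ i ∈ Finset.univ.erase z, ((-1 : ℝ) ^ (l i : ℕ)) *
              (((a z 0 - a z 1) / Real.sqrt 2) * a i 0)|
            ≤ ∑ i ∈ Finset.univ.erase z, |((-1 : ℝ) ^ (l i : ℕ)) *
              (((a z 0 - a z 1) / Real.sqrt 2) * a i 0)| := Finset.abs_sum_le_sum_abs _ _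
          _ ≤ ∑ _i ∈ Finset.univ.erase z, Real.sqrt 2 := by
              apply Finset.sum_le_sum
              intro i _
              rw [abs_mul, abs_mul, pm_abs (pm_pow _), hAt0, habs]
              norm_num
          _ = Real.sqrt 2 * ((N:ℝ) - 1) := by
              rw [Finset.sum_const, nsmul_eq_mul, hcard, mul_comm]
    calc s0 * (T - s0 * S3) ≤ |s0 * (T - s0 * S3)| := le_abs_self _
      _ = |T - s0 * S3| := by rw [abs_mul, pm_abs (pm_pow _), one_mul]
      _ ≤ |T| + |s0 * S3| := abs_sub _ _
      _ = |T| + |S3| := by rw [abs_mul, pm_abs (pm_pow _), one_mul]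
      _ ≤ Real.sqrt 2 * ((N:ℝ) - 1) + ((N:ℝ) - 1) := add_le_add hT hS3
      _ = (Real.sqrt 2 + 1) * ((N:ℝ) - 1) := by ring

end Stmt4
end
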